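/- Let n, r ≥ 1 and 0 ≤ j ≤ r be integers. Then ω_{n,r}(j) = (1/(r!·n^r)) · Σ_{i=j}^{r} C(i,j) · C(r,i) · D_{r−i,0} · (n−1)^{i−j} · n^{r−i}, where C(·,·) denotes binomial coefficients and D_{m,0} is the number of derangements of an m-element set (with D_{0,0} = 1). -/

import Mathlib

/-- The action of an element of the wreath product `C_n ≀ S_r` on `B(n,r)`. -/
def wAct (n r : ℕ) (σ : (Fin r → ZMod n) × Equiv.Perm (Fin r)) :
    ZMod n × Fin r → ZMod n × Fin r :=
  fun p => (σ.1 p.2 + p.1, σ.2 p.2)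

/-- The number of fixed points of `σ ∈ C_n ≀ S_r` acting on `B(n,r)`. -/
noncomputable def fixCount (n r : ℕ) (σ : (Fin r → ZMod n) × Equiv.Perm (Fin r)) : ℕ :=
  Nat.card {p : ZMod n × Fin r // wAct n r σ p = p}

/-- `ω_{n,r}(j)`. -/
noncomputable def omega (n r j : ℕ) : ℝ :=
  (Nat.card {σ : (Fin r → ZMod n) × Equiv.Perm (Fin r) // fixCount n r σ = j * n} : ℝ)
    / ((r.factorial * n ^ r : ℕ) : ℝ)

/-- The rencontres number `D_{r,i}`: the number of permutations of an
`r`-element set with exactly `i` fixed points (so `D_{m,0}` counts derangements). -/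
noncomputable def rencontres (r i : ℕ) : ℕ :=
  Nat.card {π : Equiv.Perm (Fin r) // Nat.card {x : Fin r // π x = x} = i}

/-!
A point `(z, x)` is fixed by `(ζ, π)` exactly when `π x = x` and `ζ x = 0`, so `(ζ, π)` has `j·n`
fixed points iff `ζ` vanishes at exactly `j` fixed points of `π`. Group the permutations by their
fixed-point set `A`, of size `i`: there are `D_{r-i,0}` permutations with fixed-point set `A`, and
`C(i,j) (n-1)^(i-j) n^(r-i)` functions `ζ` vanishing at exactly `j` points of `A`. Each size `i`
occurs for `C(r,i)` sets `A`.
-/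

open Finset Equiv

section
variable {α M : Type*} [Fintype α] [DecidableEq α]

theorem card_perm_fixedPoints_eq_numDerangements (A : Finset α) :
    #{π : Perm α | ({x | π x = x} : Finset α) = A} = numDerangements (Fintype.card α - #A) := by
  have e : {π : Perm α // ({x | π x = x} : Finset α) = A} ≃ derangements {x // x ∉ A} := by
    refine (subtypeEquivRight fun π => ?_).trans (derangements.subtypeEquiv (· ∉ A)).symm
    simp only [Finset.ext_iff, mem_filter, mem_univ, true_and, not_not,
      Function.mem_fixedPoints, Function.IsFixedPt]
    exact forall_congr' fun _ => Iff.comm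
  rw [← Fintype.card_subtype, Fintype.card_congr e, card_derangements_eq_numDerangements,
    Fintype.card_subtype_compl, Fintype.card_coe]

variable [Fintype M] [DecidableEq M] [Zero M]

theorem card_fun_zeros_on_eq (A s : Finset α) (hs : s ⊆ A) :
    #{f : α → M | {x ∈ A | f x = 0} = s}
      = (Fintype.card M - 1) ^ (#A - #s) * Fintype.card M ^ (Fintype.card α - #A) := by
  let t : α → Finset M := fun x => if x ∈ s then {0} else if x ∈ A then {0}ᶜ else univ
  have ht : ({f : α → M | {x ∈ A | f x = 0} = s} : Finset (α → M)) = Fintype.piFinset t := by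
    ext f
    simp only [Finset.ext_iff, mem_filter, mem_univ, true_and, Fintype.mem_piFinset, t]
    refine forall_congr' fun x => ?_
    by_cases hxs : x ∈ s
    · simp [hxs, hs hxs]
    · by_cases hxA : x ∈ A <;> simp [hxs, hxA]
  have h_zero : ∀ x ∈ s, #(t x) = 1 := fun x hx => by simp [t, hx]
  have h_nonzero : ∀ x ∈ A \ s, #(t x) = Fintype.card M - 1 := fun x hx => by
    rw [mem_sdiff] at hx
    simp [t, hx.1, hx.2, card_compl]
  have h_free : ∀ x ∈ Aᶜ, #(t x) = Fintype.card M := fun x hx => by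
    have hxs : x ∉ s := fun h => mem_compl.mp hx (hs h)
    simp [t, mem_compl.mp hx, hxs]
  rw [ht, Fintype.card_piFinset, ← prod_mul_prod_compl A, ← prod_sdiff hs, prod_congr rfl h_zero,
    prod_congr rfl h_nonzero, prod_congr rfl h_free, prod_const_one, mul_one, prod_const,
    prod_const, card_sdiff_of_subset hs, card_compl]

theorem card_fun_card_zeros_on_eq (A : Finset α) (j : ℕ) :
    #{f : α → M | #{x ∈ A | f x = 0} = j}
      = (#A).choose j * (Fintype.card M - 1) ^ (#A - j) * Fintype.card M ^ (Fintype.card α - #A) := by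
  have h_maps : Set.MapsTo (fun f : α → M => {x ∈ A | f x = 0})
      ({f : α → M | #{x ∈ A | f x = 0} = j} : Finset (α → M)) (A.powersetCard j) := by
    intro f hf
    simp only [coe_filter, mem_univ, true_and, Set.mem_ofPred_eq] at hf
    exact mem_powersetCard.mpr ⟨filter_subset _ A, hf⟩
  rw [card_eq_sum_card_fiberwise h_maps, sum_congr rfl fun s hs => ?_, sum_const,
    card_powersetCard, smul_eq_mul, mul_assoc]
  obtain ⟨hsA, rfl⟩ := mem_powersetCard.mp hs
  rw [filter_filter, ← card_fun_zeros_on_eq A s hsA]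
  congr 1
  exact filter_congr fun f _ => and_iff_right_of_imp fun h => h ▸ rfl

theorem card_wreath_fixedPoints_zero_eq (j : ℕ) :
    #{σ : (α → M) × Perm α | #{x | σ.2 x = x ∧ σ.1 x = 0} = j}
      = ∑ i ∈ range (Fintype.card α + 1), (Fintype.card α).choose i
          * numDerangements (Fintype.card α - i)
          * (i.choose j * (Fintype.card M - 1) ^ (i - j)
            * Fintype.card M ^ (Fintype.card α - i)) := by
  let F : ℕ → ℕ := fun i => i.choose j * (Fintype.card M - 1) ^ (i - j)
    * Fintype.card M ^ (Fintype.card α - i)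
  let fix : Perm α → Finset α := fun π => {x | π x = x}
  calc #{σ : (α → M) × Perm α | #{x | σ.2 x = x ∧ σ.1 x = 0} = j}
      = ∑ π : Perm α, #{f : α → M | #{x ∈ fix π | f x = 0} = j} := by
        simp only [card_filter, fix, filter_filter]
        exact Fintype.sum_prod_type_right _
    _ = ∑ π : Perm α, F #(fix π) := by
        simp only [card_fun_card_zeros_on_eq, F]
    _ = ∑ A : Finset α, #{π : Perm α | fix π = A} * F #A := by
        rw [← sum_fiberwise univ fix]
        refine sum_congr rfl fun A _ => ?_
        rw [sum_congr rfl fun π hπ => by rw [(mem_filter.mp hπ).2], sum_const, smul_eq_mul]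
    _ = ∑ A ∈ (univ : Finset α).powerset, numDerangements (Fintype.card α - #A) * F #A := by
        simp only [card_perm_fixedPoints_eq_numDerangements, fix, powerset_univ]
    _ = _ := by
        rw [sum_powerset_apply_card (fun i => numDerangements (Fintype.card α - i) * F i),
          card_univ]
        simp only [smul_eq_mul, mul_assoc, F]
end

theorem wAct_eq_self_iff {n r : ℕ} (σ : (Fin r → ZMod n) × Perm (Fin r)) (p : ZMod n × Fin r) :
    wAct n r σ p = p ↔ σ.2 p.2 = p.2 ∧ σ.1 p.2 = 0 := by
  simp [wAct, Prod.ext_iff, and_comm]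

theorem fixCount_eq (n r : ℕ) (σ : (Fin r → ZMod n) × Perm (Fin r)) :
    fixCount n r σ = n * #{x | σ.2 x = x ∧ σ.1 x = 0} := by
  let q (x : Fin r) : Prop := σ.2 x = x ∧ σ.1 x = 0
  let e : {p : ZMod n × Fin r // wAct n r σ p = p} ≃ {x // q x} × ZMod n :=
    (subtypeEquivRight (wAct_eq_self_iff σ)).trans <|
      ((prodComm _ _).subtypeEquiv (q := fun p => q p.1) fun _ => Iff.rfl).trans
        prodSubtypeFstEquivSubtypeProd
  rw [fixCount, Nat.card_congr e, Nat.card_prod, Nat.card_zmod, Nat.card_eq_fintype_card,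
    Fintype.card_subtype, mul_comm]

theorem rencontres_zero (m : ℕ) : rencontres m 0 = numDerangements m := by
  rw [rencontres, ← card_derangements_fin_eq_numDerangements, ← Nat.card_eq_fintype_card]
  exact Nat.card_congr <| subtypeEquivRight fun π => by
    simp [Fintype.card_eq_zero_iff, isEmpty_subtype, derangements]

theorem natCard_fixCount_eq_mul (n r j : ℕ) [NeZero n] :
    Nat.card {σ : (Fin r → ZMod n) × Perm (Fin r) // fixCount n r σ = j * n}
      = #{σ : (Fin r → ZMod n) × Perm (Fin r) | #{x | σ.2 x = x ∧ σ.1 x = 0} = j} := by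
  rw [← Fintype.card_subtype, ← Nat.card_eq_fintype_card]
  exact Nat.card_congr <| subtypeEquivRight fun σ => by
    rw [fixCount_eq, mul_comm j, Nat.mul_left_cancel_iff (Nat.pos_of_neZero n)]

theorem stmt17_general (n r j : ℕ) (hn : 1 ≤ n) :
    omega n r j
      = (1 / ((r.factorial * n ^ r : ℕ) : ℝ)) *
          ∑ i ∈ Finset.Icc j r,
            (Nat.choose i j : ℝ) * (Nat.choose r i : ℝ) * (rencontres (r - i) 0 : ℝ) *
              ((n : ℝ) - 1) ^ (i - j) * (n : ℝ) ^ (r - i) := by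
  have : NeZero n := ⟨by omega⟩
  have h_vanish : ∀ i ∈ range (r + 1), i ∉ Icc j r →
      r.choose i * numDerangements (r - i) * (i.choose j * (n - 1) ^ (i - j) * n ^ (r - i)) = 0 :=
    fun i hi hij => by
      simp [Nat.choose_eq_zero_of_lt (show i < j by simp_all)]
  rw [omega, natCard_fixCount_eq_mul, card_wreath_fixedPoints_zero_eq, Fintype.card_fin,
    ZMod.card, ← sum_subset (fun i hi => by simp_all) h_vanish, div_eq_inv_mul,
    one_div, Nat.cast_sum, mul_sum, mul_sum]
  refine sum_congr rfl fun i _ => ?_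
  rw [rencontres_zero]
  push_cast [Nat.cast_sub hn]
  ring

theorem stmt17 (n r j : ℕ) (hn : 1 ≤ n) (hr : 1 ≤ r) (hj : j ≤ r) :
    omega n r j
      = (1 / ((r.factorial * n ^ r : ℕ) : ℝ)) *
          ∑ i ∈ Finset.Icc j r,
            (Nat.choose i j : ℝ) * (Nat.choose r i : ℝ) * (rencontres (r - i) 0 : ℝ) *
              ((n : ℝ) - 1) ^ (i - j) * (n : ℝ) ^ (r - i) :=
  stmt17_general n r j hn
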